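/- Let m ≥ 2, α > 1/2, and let Ŷ ∈ ℝ^{n×m} admit the decomposition Ŷ = Σ_{k=1}^L σ_k p_k q_kᵀ where σ_1 > 0, σ_k ≥ 0, ‖p_k‖ = 1 and ‖q_k‖ = 1 for all k, and where q_1 = r/‖r‖ with r satisfying the power law r_g = r_max · g^(−α), r_max > 0. If a row index u satisfies p_{1u} ≥ 0 and σ_1 · p_{1u} · (1 − 2^(−α))/√ζ(2α) > √2 · Σ_{k=2}^L σ_k, then Ŷ_{u1} > Ŷ_{ui} for every i ∈ {2,…,m}. -/

import Mathlib

/-! The head term `σ₁ p₁ᵤ q₁` separates item 1 from item `i` by at least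
`σ₁ p₁ᵤ (1 - 2^(-α)) / √ζ(2α)`: its numerator is `r₁ - rᵢ ≥ rmax (1 - 2^(-α))`, and the
partial sums of `∑ g^(-2α)` bound `‖r‖ ≤ rmax √ζ(2α)`. Every other term moves the gap by at most
`σₖ |pₖᵤ| |qₖ₁ - qₖᵢ| ≤ σₖ √2`, since a unit vector has entries of modulus at most one and
any two of its entries differ by at most `√2`. -/

open Finset

/-- Riemann zeta function for real `s > 1`: `ζ(s) = ∑_{j=1}^∞ j^(−s)`. -/
noncomputable def zetaR (s : ℝ) : ℝ := ∑' j : ℕ, ((j : ℝ) + 1) ^ (-s)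

/-- Euclidean (L2) norm of a vector. -/
noncomputable def l2enorm {k : ℕ} (v : Fin k → ℝ) : ℝ := Real.sqrt (∑ i, v i ^ 2)

lemma summable_nat_add_one_rpow_neg {s : ℝ} (hs : 1 < s) :
    Summable (fun j : ℕ => ((j : ℝ) + 1) ^ (-s)) := by
  have h : Summable (fun j : ℕ => (j : ℝ) ^ (-s)) := Real.summable_nat_rpow.mpr (by linarith)
  simpa using (summable_nat_add_iff 1).mpr h

lemma sum_range_le_zetaR {s : ℝ} (hs : 1 < s) (m : ℕ) :
    ∑ j ∈ range m, ((j : ℝ) + 1) ^ (-s) ≤ zetaR s :=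
  (summable_nat_add_one_rpow_neg hs).sum_le_tsum _ fun _ _ => by positivity

section l2enorm

variable {k : ℕ} (v : Fin k → ℝ)

lemma abs_le_l2enorm (i : Fin k) : |v i| ≤ l2enorm v :=
  Real.abs_le_sqrt (single_le_sum (f := fun j => v j ^ 2) (fun _ _ => sq_nonneg _) (mem_univ i))

lemma abs_sub_le_sqrt_two_mul_l2enorm {i j : Fin k} (hij : i ≠ j) :
    |v i - v j| ≤ Real.sqrt 2 * l2enorm v := by
  have hpair : v i ^ 2 + v j ^ 2 ≤ ∑ g, v g ^ 2 := by
    rw [← sum_pair (f := fun g => v g ^ 2) hij]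
    exact sum_le_sum_of_subset_of_nonneg (subset_univ _) fun _ _ _ => sq_nonneg _
  rw [l2enorm, ← Real.sqrt_mul zero_le_two]
  exact Real.abs_le_sqrt (by nlinarith [sq_nonneg (v i + v j)])

end l2enorm

section powerLaw

variable {m : ℕ} {α rmax : ℝ} {r : Fin m → ℝ}
  (hpow : ∀ g : Fin m, r g = rmax * (((g : ℕ) : ℝ) + 1) ^ (-α))
include hpow

lemma l2enorm_le_of_powerLaw (hα : 1 / 2 < α) (hrmax : 0 ≤ rmax) :
    l2enorm r ≤ rmax * Real.sqrt (zetaR (2 * α)) := by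
  have hsq : ∑ g, r g ^ 2 = rmax ^ 2 * ∑ j ∈ range m, ((j : ℝ) + 1) ^ (-(2 * α)) := by
    rw [mul_sum, ← Fin.sum_univ_eq_sum_range (fun j => rmax ^ 2 * ((j : ℝ) + 1) ^ (-(2 * α)))]
    refine sum_congr rfl fun g _ => ?_
    rw [hpow g, mul_pow, ← Real.rpow_mul_natCast (by positivity)]
    norm_num [mul_comm]
  calc l2enorm r
      ≤ Real.sqrt (rmax ^ 2 * zetaR (2 * α)) := by
        rw [l2enorm, hsq]
        gcongr
        exact sum_range_le_zetaR (by linarith) m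
    _ = rmax * Real.sqrt (zetaR (2 * α)) := by
        rw [Real.sqrt_mul (sq_nonneg _), Real.sqrt_sq hrmax]

lemma sub_ge_of_powerLaw (hα : 0 ≤ α) (hrmax : 0 ≤ rmax) {i₀ i : Fin m}
    (hi₀ : (i₀ : ℕ) = 0) (hi : (i : ℕ) ≠ 0) :
    rmax * (1 - (2 : ℝ) ^ (-α)) ≤ r i₀ - r i := by
  have htwo : (2 : ℝ) ≤ ((i : ℕ) : ℝ) + 1 := by
    have : (1 : ℝ) ≤ ((i : ℕ) : ℝ) := by exact_mod_cast Nat.one_le_iff_ne_zero.mpr hi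
    linarith
  have hdecay : (((i : ℕ) : ℝ) + 1) ^ (-α) ≤ (2 : ℝ) ^ (-α) :=
    Real.rpow_le_rpow_of_nonpos two_pos htwo (neg_nonpos.mpr hα)
  rw [hpow, hpow, hi₀, Nat.cast_zero, zero_add, Real.one_rpow]
  nlinarith

lemma div_sqrt_zetaR_le_sub_div_of_powerLaw (hα : 1 / 2 < α) (hrmax : 0 < rmax) {i₀ i : Fin m}
    (hi₀ : (i₀ : ℕ) = 0) (hi : (i : ℕ) ≠ 0) :
    (1 - (2 : ℝ) ^ (-α)) / Real.sqrt (zetaR (2 * α)) ≤ r i₀ / l2enorm r - r i / l2enorm r := by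
  have hr₀ : r i₀ = rmax := by simp [hpow, hi₀]
  have hnorm_pos : 0 < l2enorm r := (hrmax.trans_eq hr₀.symm).trans_le
    ((le_abs_self _).trans (abs_le_l2enorm r i₀))
  have hgap : 0 ≤ 1 - (2 : ℝ) ^ (-α) :=
    sub_nonneg.mpr (Real.rpow_le_one_of_one_le_of_nonpos one_le_two (by linarith))
  calc (1 - (2 : ℝ) ^ (-α)) / Real.sqrt (zetaR (2 * α))
      = rmax * (1 - (2 : ℝ) ^ (-α)) / (rmax * Real.sqrt (zetaR (2 * α))) :=
        (mul_div_mul_left _ _ hrmax.ne').symm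
    _ ≤ rmax * (1 - (2 : ℝ) ^ (-α)) / l2enorm r := by
        gcongr
        exact l2enorm_le_of_powerLaw hpow hα hrmax.le
    _ ≤ (r i₀ - r i) / l2enorm r := by
        gcongr
        exact sub_ge_of_powerLaw hpow (by linarith) hrmax.le hi₀ hi
    _ = r i₀ / l2enorm r - r i / l2enorm r := sub_div _ _ _

end powerLaw

lemma sum_mul_sub_ge_of_unit {n m L : ℕ} (σ : Fin L → ℝ) (p : Fin L → Fin n → ℝ)
    (q : Fin L → Fin m → ℝ) (hσnn : ∀ k, 0 ≤ σ k)
    (hp : ∀ k, l2enorm (p k) = 1) (hq : ∀ k, l2enorm (q k) = 1)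
    (k₀ : Fin L) (u : Fin n) {i j : Fin m} (hij : i ≠ j) :
    σ k₀ * p k₀ u * (q k₀ i - q k₀ j) - Real.sqrt 2 * ∑ k ∈ univ.erase k₀, σ k
      ≤ ∑ k, σ k * p k u * q k i - ∑ k, σ k * p k u * q k j := by
  have hterm : ∀ k, -(Real.sqrt 2 * σ k) ≤ σ k * p k u * (q k i - q k j) := fun k => by
    have hpu : |p k u| ≤ 1 := hp k ▸ abs_le_l2enorm (p k) u
    have hqij : |q k i - q k j| ≤ Real.sqrt 2 := by
      simpa [hq k] using abs_sub_le_sqrt_two_mul_l2enorm (q k) hij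
    have hprod : |p k u * (q k i - q k j)| ≤ Real.sqrt 2 := by
      rw [abs_mul]
      simpa using mul_le_mul hpu hqij (abs_nonneg _) zero_le_one
    rw [mul_assoc]
    nlinarith [neg_abs_le (p k u * (q k i - q k j)), hσnn k]
  have htail : -(Real.sqrt 2 * ∑ k ∈ univ.erase k₀, σ k)
      ≤ ∑ k ∈ univ.erase k₀, σ k * p k u * (q k i - q k j) := by
    rw [mul_sum, ← sum_neg_distrib]
    exact sum_le_sum fun k _ => hterm k
  rw [← sum_sub_distrib, ← add_sum_erase _ _ (mem_univ k₀)]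
  simp only [← mul_sub]
  linarith

/-- Let `m ≥ 2`, `α > 1/2`, and let `Ŷ = Σ_{k=1}^L σ_k p_k q_kᵀ`
with `σ_1 > 0`, `σ_k ≥ 0`, unit vectors `p_k, q_k`, and `q_1 = r/‖r‖` with `r` a
power-law vector.  If a row `u` satisfies `p_{1u} ≥ 0` and
`σ_1 · p_{1u} · (1 − 2^(−α))/√ζ(2α) > √2 · Σ_{k=2}^L σ_k`, then the most popular item
(index `1`, Fin-index `0`) is the strict top-1 of row `u`: `Ŷ_{u1} > Ŷ_{ui}` for all
`i ∈ {2,…,m}`. -/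
theorem top1_sufficient_condition
    (n m L : ℕ) (hm : 2 ≤ m) (hL : 0 < L)
    (α rmax : ℝ) (hα : 1 / 2 < α) (hrmax : 0 < rmax)
    (r : Fin m → ℝ) (hpow : ∀ g : Fin m, r g = rmax * (((g : ℕ) : ℝ) + 1) ^ (-α))
    (σ : Fin L → ℝ) (p : Fin L → Fin n → ℝ) (q : Fin L → Fin m → ℝ)
    (hσnn : ∀ k, 0 ≤ σ k)
    (hp : ∀ k, l2enorm (p k) = 1) (hq : ∀ k, l2enorm (q k) = 1)
    (hq1 : q ⟨0, hL⟩ = fun i => r i / l2enorm r)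
    (Yhat : Matrix (Fin n) (Fin m) ℝ)
    (hYhat : ∀ u i, Yhat u i = ∑ k, σ k * p k u * q k i)
    (u : Fin n) (hu : 0 ≤ p ⟨0, hL⟩ u)
    (hcond : Real.sqrt 2 * ∑ k ∈ Finset.univ.filter (fun k : Fin L => k ≠ ⟨0, hL⟩), σ k
      < σ ⟨0, hL⟩ * p ⟨0, hL⟩ u * ((1 - (2 : ℝ) ^ (-α)) / Real.sqrt (zetaR (2 * α)))) :
    ∀ i : Fin m, (i : ℕ) ≠ 0 → Yhat u i < Yhat u ⟨0, by omega⟩ := by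
  intro i hi
  have hne : (⟨0, by omega⟩ : Fin m) ≠ i := fun h => hi (by rw [← h])
  have hhead := mul_le_mul_of_nonneg_left
    (div_sqrt_zetaR_le_sub_div_of_powerLaw hpow hα hrmax (i₀ := ⟨0, by omega⟩) rfl hi)
    (mul_nonneg (hσnn ⟨0, hL⟩) hu)
  have htail := sum_mul_sub_ge_of_unit σ p q hσnn hp hq ⟨0, hL⟩ u hne
  rw [hq1] at htail
  rw [filter_ne'] at hcond
  rw [hYhat, hYhat]
  linarith
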